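/- arXiv:2509.23527 — 2 statements merged into one kernel-verified Lean document; each statement's English description precedes it below -/
import Mathlib

section
/- Let X be a real n×d matrix, η*, z ∈ ℝ^n, γ, λ ∈ ℝ, and let ℓ : ℝ³ → ℝ be such that a ↦ ℓ(a,b,c) is differentiable for every (b,c), with derivative ∂₁ℓ. Fix s ∈ ℕ, i ∈ {1,…,n}, θ_init ∈ ℝ^d. Write θ^t for the unperturbed sequence (ε = 0 below), D^k := diag( ∂₁ℓ((Xθ^k)_r, η*_r, z_r) )_{r=1}^n and Ω^k := (1−γλ) I_d − γ Xᵀ D^k X. For each ε ∈ ℝ define (θ^{t,ε})_{t≥0} by θ^{0,ε} = θ_init and θ^{t+1,ε} = θ^{t,ε} − γ( Xᵀ ℓ(Xθ^{t,ε}, η*, z) + λ θ^{t,ε} − ε 1{t = s} Xᵀ D^s e_i ), where e_i is the i-th standard basis vector of ℝ^n. Then for every t ≥ s+1, the map ε ↦ X θ^{t,ε} is differentiable at ε = 0 with derivative γ · X Ω^{t−1} Ω^{t−2} ⋯ Ω^{s+1} Xᵀ D^s e_i, where the empty product (for t = s+1) is I_d. -/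
/-!
Before step `s` the perturbation has not acted, so `θ ε t = θ 0 t` for `t ≤ s`, and `θ ε (s + 1)`
is affine in `ε` with slope `γ Xᵀ Dˢ eᵢ`. After that, `θ ε (t + 1) = G (θ ε t)` for the unperturbed
gradient step `G`, whose Fréchet derivative at `θ 0 t` is `Ωᵗ` because the entrywise loss has the
diagonal derivative `Dᵗ`; the chain rule multiplies the slope by `Ωᵗ` at every step.
-/

open Matrix

theorem hasFDerivAt_toLp_entrywise {𝕜 ι : Type*} [RCLike 𝕜] [Fintype ι] [DecidableEq ι]
    {g : ι → 𝕜 → 𝕜} {g' : ι → 𝕜} {a : EuclideanSpace 𝕜 ι}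
    (hg : ∀ r, HasDerivAt (g r) (g' r) (a r)) :
    HasFDerivAt (fun b : EuclideanSpace 𝕜 ι => WithLp.toLp 2 fun r => g r (b r))
      (toEuclideanCLM (n := ι) (𝕜 := 𝕜) (diagonal g')) a := by
  have hcoord : HasFDerivAt (fun b : EuclideanSpace 𝕜 ι => fun r => g r (b r))
      ((PiLp.continuousLinearEquiv 2 𝕜 _).toContinuousLinearMap.comp
        (toEuclideanCLM (n := ι) (𝕜 := 𝕜) (diagonal g'))) a := by
    refine hasFDerivAt_pi'.2 fun r => ?_
    refine ((hg r).comp_hasFDerivAt a (PiLp.hasFDerivAt_apply 2 a r)).congr_fderiv ?_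
    ext v
    simp [mulVec_diagonal]
  refine ((PiLp.hasFDerivAt_toLp 2 _).comp a hcoord).congr_fderiv ?_
  ext v
  simp

section GradientDescent

variable {m k : Type*} [Fintype m] [DecidableEq m] [Fintype k] [DecidableEq k]
  (X : Matrix m k ℝ) (γ lam : ℝ)

noncomputable def gdStep (g : m → ℝ → ℝ) (θ : EuclideanSpace ℝ k) : EuclideanSpace ℝ k :=
  θ - γ • (toEuclideanLin Xᵀ (WithLp.toLp 2 fun r => g r (toEuclideanLin X θ r)) + lam • θ)

def gdJacobian (D : m → ℝ) : Matrix k k ℝ :=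
  (1 - γ * lam) • 1 - γ • (Xᵀ * diagonal D * X)

theorem hasFDerivAt_gdStep {g : m → ℝ → ℝ} {g' : m → ℝ} {θ : EuclideanSpace ℝ k}
    (hg : ∀ r, HasDerivAt (g r) (g' r) (toEuclideanLin X θ r)) :
    HasFDerivAt (gdStep X γ lam g)
      (toEuclideanCLM (n := k) (𝕜 := ℝ) (gdJacobian X γ lam g')) θ := by
  have hloss := (toEuclideanLin Xᵀ).toContinuousLinearMap.hasFDerivAt.comp θ
    ((hasFDerivAt_toLp_entrywise hg).comp θ (toEuclideanLin X).toContinuousLinearMap.hasFDerivAt)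
  refine ((hasFDerivAt_id θ).sub
    ((hloss.add ((hasFDerivAt_id θ).const_smul lam)).const_smul γ)).congr_fderiv ?_
  ext v r
  simp [gdJacobian, mulVec_mulVec, Matrix.mul_assoc]
  ring

end GradientDescent

section ImpulseOrbit

variable {E : Type*} [NormedAddCommGroup E] [NormedSpace ℝ E]

structure IsImpulseOrbit (F : E → E) (s : ℕ) (v : E) (θ : ℝ → ℕ → E) : Prop where
  init : ∀ ε, θ ε 0 = θ 0 0
  succ : ∀ ε t, θ ε (t + 1) = F (θ ε t) + (ε * if t = s then 1 else 0) • v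

namespace IsImpulseOrbit

variable {F : E → E} {s : ℕ} {v : E} {θ : ℝ → ℕ → E}

theorem eq_of_le (hθ : IsImpulseOrbit F s v θ) {t : ℕ} (ht : t ≤ s) (ε : ℝ) :
    θ ε t = θ 0 t := by
  induction t with
  | zero => exact hθ.init ε
  | succ t ih => simp [hθ.succ, ih (by omega), show t ≠ s by omega]

theorem hasDerivAt (hθ : IsImpulseOrbit F s v θ) {J : ℕ → E →L[ℝ] E}
    (hF : ∀ t, s < t → HasFDerivAt F (J t) (θ 0 t)) {t : ℕ} (ht : s < t) :
    HasDerivAt (fun ε => θ ε t)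
      (((List.range (t - 1 - s)).map fun k => J (t - 1 - k)).prod v) 0 := by
  induction t, ht using Nat.le_induction with
  | base =>
    have hθs : (fun ε => θ ε (s + 1)) = fun ε => F (θ 0 s) + ε • v := by
      funext ε
      simp [hθ.succ, hθ.eq_of_le le_rfl ε]
    simpa [hθs] using ((hasDerivAt_id (0 : ℝ)).smul_const v).const_add (F (θ 0 s))
  | succ t hst ih =>
    have hθt : (fun ε => θ ε (t + 1)) = fun ε => F (θ ε t) := by
      funext ε
      simp [hθ.succ, show t ≠ s by omega]
    have hprod : ((List.range (t + 1 - 1 - s)).map fun k => J (t + 1 - 1 - k)).prod =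
        J t * ((List.range (t - 1 - s)).map fun k => J (t - 1 - k)).prod := by
      rw [show t + 1 - 1 - s = t - 1 - s + 1 by omega, List.range_succ_eq_map]
      simp only [List.map_cons, List.map_map, List.prod_cons]
      congr 3
      funext k
      simp only [Function.comp_apply]
      congr 1
      omega
    rw [hθt, hprod, mul_apply_eq_comp]
    exact (hF t hst).comp_hasDerivAt 0 ih

end IsImpulseOrbit

end ImpulseOrbit

theorem stmt13 (n d : ℕ) (X : Matrix (Fin n) (Fin d) ℝ)
    (ηs z : Fin n → ℝ) (γ lam : ℝ)
    (ℓ dℓ : ℝ → ℝ → ℝ → ℝ)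
    (hdiff : ∀ a b c : ℝ, HasDerivAt (fun a' => ℓ a' b c) (dℓ a b c) a)
    (s : ℕ) (i : Fin n) (θinit : EuclideanSpace ℝ (Fin d))
    (θ : ℝ → ℕ → EuclideanSpace ℝ (Fin d))
    (hinit : ∀ ε : ℝ, θ ε 0 = θinit)
    (hrec : ∀ (ε : ℝ) (t : ℕ), θ ε (t + 1) =
      θ ε t -
        γ • (Matrix.toEuclideanLin Xᵀ
              (WithLp.toLp 2 (fun r => ℓ (Matrix.toEuclideanLin X (θ ε t) r) (ηs r) (z r))) +
            lam • θ ε t -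
            (ε * (if t = s then 1 else 0)) •
              Matrix.toEuclideanLin
                (Xᵀ * Matrix.diagonal (fun r =>
                  dℓ (Matrix.toEuclideanLin X (θ 0 s) r) (ηs r) (z r)))
                (EuclideanSpace.single i 1))) :
    ∀ t : ℕ, s + 1 ≤ t →
      HasDerivAt (fun ε => Matrix.toEuclideanLin X (θ ε t))
        (γ •
          Matrix.toEuclideanLin
            (X *
              (((List.range (t - 1 - s)).map (fun k =>
                (1 - γ * lam) • (1 : Matrix (Fin d) (Fin d) ℝ) -
                  γ • (Xᵀ * Matrix.diagonal (fun r =>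
                      dℓ (Matrix.toEuclideanLin X (θ 0 (t - 1 - k)) r) (ηs r) (z r)) * X))).prod) *
              Xᵀ *
              Matrix.diagonal (fun r => dℓ (Matrix.toEuclideanLin X (θ 0 s) r) (ηs r) (z r)))
            (EuclideanSpace.single i 1))
        0 := by
  intro t ht
  set D : ℕ → Fin n → ℝ := fun j r => dℓ (toEuclideanLin X (θ 0 j) r) (ηs r) (z r) with hD
  have horbit : IsImpulseOrbit (gdStep X γ lam fun r a => ℓ a (ηs r) (z r)) s
      (γ • toEuclideanLin (Xᵀ * diagonal (D s)) (EuclideanSpace.single i 1)) θ := by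
    refine ⟨fun ε => (hinit ε).trans (hinit 0).symm, fun ε t => ?_⟩
    rw [hrec, gdStep]
    module
  have hθ := horbit.hasDerivAt
    (J := fun j => toEuclideanCLM (n := Fin d) (𝕜 := ℝ) (gdJacobian X γ lam (D j)))
    (fun j _ => hasFDerivAt_gdStep X γ lam fun r => hdiff _ _ _) ht
  have hprod : ((List.range (t - 1 - s)).map fun j =>
        toEuclideanCLM (n := Fin d) (𝕜 := ℝ) (gdJacobian X γ lam (D (t - 1 - j)))).prod =
      toEuclideanCLM (n := Fin d) (𝕜 := ℝ)
        ((List.range (t - 1 - s)).map fun j => gdJacobian X γ lam (D (t - 1 - j))).prod := by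
    rw [map_list_prod, List.map_map]
    rfl
  refine ((toEuclideanLin X).toContinuousLinearMap.hasFDerivAt.comp_hasDerivAt 0 hθ).congr_deriv ?_
  rw [hprod]
  ext r
  simp [ofLp_toEuclideanCLM, mulVec_mulVec, mulVec_smul, Matrix.mul_assoc, gdJacobian, hD]
end

section
/- Let (Ω, F, P) be a probability space and let θ*, u^∞, (θ^t)_{t≥0}, (u^t)_{t≥0} be real random variables in L²(P). Let γ > 0 and λ, δ ∈ ℝ, and let Γ_t, R_η(t,s) (t > s ≥ 0), R_♦(t), R_*(t), R_♦♦(t) be real numbers. Suppose: (i) for every t ≥ 0, θ^{t+1} = θ^t + γ( −λθ^t − δΓ_t θ^t − Σ_{s=0}^{t−1} R_η(t,s) θ^s − R_♦(t) θ⁰ − (R_*(t) + R_♦♦(t)) θ* + u^t ) almost surely; (ii) there exists θ^∞ ∈ L²(P) and constants C, c > 0 with ‖θ^t − θ^∞‖_{L²} ≤ C e^{−ct} and ‖u^t − u^∞‖_{L²} ≤ C e^{−ct} for all t; (iii) Γ_t → Γ^∞, R_♦(t) → 0, R_♦♦(t) → 0, and R_*(t) → R_*^∞ as t → ∞; (iv)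 |R_η(t+s, t)| ≤ C e^{−cs} for all t ≥ 0, s ≥ 1, and for each s ≥ 1 the limit R(s) := lim_{t→∞} R_η(t+s, t) exists. Then the series R_η^∞ := Σ_{s=1}^∞ R(s) converges absolutely and 0 = −(λ + δΓ^∞ + R_η^∞) θ^∞ − R_*^∞ θ* + u^∞ almost surely. -/
/-!
In `L²(P)` the recursion reads `θ^{t+1} = θ^t + γ D_t`, with a drift `D_t` built linearly from
the iterates. Since `θ^t` converges, `D_t = γ⁻¹ (θ^{t+1} - θ^t) → 0`. On the other hand every
term of `D_t` converges; for the memory term `∑_{s<t} R_η(t,s) θ^s` this is Tannery's theorem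
after reindexing by the lag `t - s`, the exponential bound on the kernel supplying a summable
majorant. Uniqueness of limits makes the limit drift vanish in `L²`, hence almost surely.
-/

open MeasureTheory Filter Topology Finset Real

theorem Real.summable_mul_exp_neg_mul_succ {c : ℝ} (hc : 0 < c) (C : ℝ) :
    Summable fun k : ℕ => C * exp (-c * (k + 1)) := by
  refine (summable_exp_nat_mul_iff.2 (neg_lt_zero.2 hc)).mul_left (C * exp (-c)) |>.congr
    fun k => ?_
  rw [mul_assoc, ← exp_add]
  ring_nf

theorem Real.tendsto_mul_exp_neg_mul_natCast {c : ℝ} (hc : 0 < c) (C : ℝ) :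
    Tendsto (fun t : ℕ => C * exp (-c * t)) atTop (𝓝 0) := by
  simpa using (tendsto_exp_neg_atTop_nhds_zero.comp
    (tendsto_natCast_atTop_atTop.const_mul_atTop hc)).const_mul C

section

variable {𝕜 E : Type*} [Field 𝕜] [AddCommGroup E] [Module 𝕜 E] [TopologicalSpace E]
  [IsTopologicalAddGroup E] [ContinuousConstSMul 𝕜 E] [T2Space E]

theorem eq_zero_of_tendsto_of_add_smul {γ : 𝕜} (hγ : γ ≠ 0) {x d : ℕ → E} {x₀ d₀ : E}
    (hrec : ∀ t, x (t + 1) = x t + γ • d t) (hx : Tendsto x atTop (𝓝 x₀))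
    (hd : Tendsto d atTop (𝓝 d₀)) : d₀ = 0 := by
  have hdiff : Tendsto (fun t => γ⁻¹ • (x (t + 1) - x t)) atTop (𝓝 (γ⁻¹ • (x₀ - x₀))) :=
    (((tendsto_add_atTop_iff_nat 1).2 hx).sub hx).const_smul γ⁻¹
  rw [sub_self, smul_zero] at hdiff
  refine tendsto_nhds_unique hd (hdiff.congr fun t => ?_)
  rw [hrec, add_sub_cancel_left, inv_smul_smul₀ hγ]

end

section MemoryKernel

variable {K : ℕ → ℕ → ℝ} {R : ℕ → ℝ} {C c : ℝ}

theorem abs_le_of_tendsto_kernel (hK : ∀ t s : ℕ, 1 ≤ s → |K (t + s) t| ≤ C * exp (-c * s))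
    (hR : ∀ s : ℕ, 1 ≤ s → Tendsto (fun t => K (t + s) t) atTop (𝓝 (R s))) {s : ℕ}
    (hs : 1 ≤ s) : |R s| ≤ C * exp (-c * s) :=
  le_of_tendsto' (hR s hs).abs fun t => hK t s hs

theorem summable_abs_of_tendsto_kernel (hc : 0 < c)
    (hK : ∀ t s : ℕ, 1 ≤ s → |K (t + s) t| ≤ C * exp (-c * s))
    (hR : ∀ s : ℕ, 1 ≤ s → Tendsto (fun t => K (t + s) t) atTop (𝓝 (R s))) :
    Summable fun s : ℕ => |R (s + 1)| :=
  (summable_mul_exp_neg_mul_succ hc C).of_nonneg_of_le (fun _ => abs_nonneg _) fun s => by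
    exact_mod_cast abs_le_of_tendsto_kernel hK hR (Nat.le_add_left 1 s)

theorem tendsto_sum_range_kernel_smul {E : Type*} [NormedAddCommGroup E] [NormedSpace ℝ E]
    [CompleteSpace E] (hc : 0 < c)
    (hK : ∀ t s : ℕ, 1 ≤ s → |K (t + s) t| ≤ C * exp (-c * s))
    (hR : ∀ s : ℕ, 1 ≤ s → Tendsto (fun t => K (t + s) t) atTop (𝓝 (R s)))
    {x : ℕ → E} {x₀ : E} (hx : Tendsto x atTop (𝓝 x₀)) :
    Tendsto (fun t => ∑ s ∈ range t, K t s • x s) atTop (𝓝 ((∑' k, R (k + 1)) • x₀)) := by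
  obtain ⟨B, hB⟩ := (Metric.isBounded_range_of_tendsto x hx).exists_norm_le
  -- index the memory sum by the lag `k + 1 = t - s`, so that the summands converge termwise
  set f : ℕ → ℕ → E := fun t k => if k < t then K t (t - 1 - k) • x (t - 1 - k) else 0
  have hf_sum (t : ℕ) : ∑ s ∈ range t, K t s • x s = ∑' k, f t k := by
    rw [tsum_eq_sum (s := range t) fun k hk => if_neg (by simpa using hk),
      ← sum_range_reflect]
    exact sum_congr rfl fun k hk => (if_pos (mem_range.1 hk)).symm
  have hf_lim (k : ℕ) : Tendsto (f · k) atTop (𝓝 (R (k + 1) • x₀)) := by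
    refine (tendsto_add_atTop_iff_nat (k + 1)).1 (((hR (k + 1) k.succ_pos).smul hx).congr
      fun n => ?_)
    simp only [f, if_pos (by omega : k < n + (k + 1)),
      show n + (k + 1) - 1 - k = n by omega]
  have hB₀ : 0 ≤ B := (norm_nonneg _).trans (hB _ ⟨0, rfl⟩)
  have hf_bound (t k : ℕ) : ‖f t k‖ ≤ C * exp (-c * (k + 1)) * B := by
    have hKk (n : ℕ) : |K (n + (k + 1)) n| ≤ C * exp (-c * (k + 1)) :=
      mod_cast hK n (k + 1) k.succ_pos
    by_cases hk : k < t
    · obtain ⟨n, rfl⟩ : ∃ n, t = n + (k + 1) := ⟨t - (k + 1), by omega⟩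
      simp only [f, if_pos hk, show n + (k + 1) - 1 - k = n by omega, norm_smul,
        Real.norm_eq_abs]
      exact mul_le_mul (hKk n) (hB _ ⟨n, rfl⟩) (norm_nonneg _) ((abs_nonneg _).trans (hKk n))
    · simp only [f, if_neg hk, norm_zero]
      exact mul_nonneg ((abs_nonneg _).trans (hKk 0)) hB₀
  have hlim := tendsto_tsum_of_dominated_convergence
    ((summable_mul_exp_neg_mul_succ hc C).mul_right B) hf_lim (Eventually.of_forall hf_bound)
  rw [(summable_abs_of_tendsto_kernel hc hK hR).of_abs.tsum_smul_const] at hlim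
  exact hlim.congr fun t => (hf_sum t).symm

theorem zero_eq_of_tendsto_of_memory_recursion {E : Type*} [NormedAddCommGroup E]
    [NormedSpace ℝ E] [CompleteSpace E] {x u : ℕ → E} {x₀ u₀ xstar : E}
    {γ lam δ Γ₀ Rs₀ : ℝ} {Γ Rd Rs Rdd : ℕ → ℝ} (hγ : γ ≠ 0) (hc : 0 < c)
    (hrec : ∀ t, x (t + 1) = x t + γ • (-(lam • x t) - (δ * Γ t) • x t
      - ∑ s ∈ range t, K t s • x s - Rd t • x 0 - (Rs t + Rdd t) • xstar + u t))
    (hx : Tendsto x atTop (𝓝 x₀)) (hu : Tendsto u atTop (𝓝 u₀))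
    (hΓ : Tendsto Γ atTop (𝓝 Γ₀)) (hRd : Tendsto Rd atTop (𝓝 0))
    (hRdd : Tendsto Rdd atTop (𝓝 0)) (hRs : Tendsto Rs atTop (𝓝 Rs₀))
    (hK : ∀ t s : ℕ, 1 ≤ s → |K (t + s) t| ≤ C * exp (-c * s))
    (hR : ∀ s : ℕ, 1 ≤ s → Tendsto (fun t => K (t + s) t) atTop (𝓝 (R s))) :
    0 = -(lam + δ * Γ₀ + ∑' s, R (s + 1)) • x₀ - Rs₀ • xstar + u₀ := by
  have hdrift := (((((hx.const_smul lam).neg.sub ((hΓ.const_mul δ).smul hx)).sub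
    (tendsto_sum_range_kernel_smul hc hK hR hx)).sub (hRd.smul_const (x 0))).sub
    ((hRs.add hRdd).smul_const xstar)).add hu
  rw [← eq_zero_of_tendsto_of_add_smul hγ hrec hx hdrift]
  module

end MemoryKernel

namespace MeasureTheory.MemLp

variable {α E : Type*} [MeasurableSpace α] {μ : Measure α} {p : ENNReal} [NormedAddCommGroup E]

theorem toLp_finsetSum {ι : Type*} (s : Finset ι) {f : ι → α → E} (hf : ∀ i, MemLp (f i) p μ) :
    (memLp_finsetSum' s fun i _ => hf i).toLp (∑ i ∈ s, f i) = ∑ i ∈ s, (hf i).toLp (f i) := by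
  classical
  induction s using Finset.induction_on with
  | empty => simp
  | insert i s hi ih =>
    simp only [Finset.sum_insert hi]
    rw [← ih]
    rfl

theorem tendsto_toLp_of_eLpNorm_sub_le [Fact (1 ≤ p)] {ι : Type*} {l : Filter ι}
    {f : ι → α → E} {g : α → E} (hf : ∀ i, MemLp (f i) p μ) (hg : MemLp g p μ) {b : ι → ℝ}
    (hb : Tendsto b l (𝓝 0)) (hfg : ∀ i, eLpNorm (f i - g) p μ ≤ ENNReal.ofReal (b i)) :
    Tendsto (fun i => (hf i).toLp (f i)) l (𝓝 (hg.toLp g)) := by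
  rw [Lp.tendsto_Lp_iff_tendsto_eLpNorm'']
  have hb' := ENNReal.tendsto_ofReal hb
  rw [ENNReal.ofReal_zero] at hb'
  exact tendsto_of_tendsto_of_tendsto_of_le_of_le tendsto_const_nhds hb' (fun _ => bot_le) hfg

end MeasureTheory.MemLp

theorem stmt18_general {Ω : Type*} [MeasurableSpace Ω] (P : Measure Ω)
    (θstar uinf : Ω → ℝ) (θ u : ℕ → Ω → ℝ)
    (hθstar : MemLp θstar 2 P) (huinf : MemLp uinf 2 P)
    (hθl2 : ∀ t, MemLp (θ t) 2 P) (hul2 : ∀ t, MemLp (u t) 2 P)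
    (γ lam δ : ℝ) (hγ : 0 < γ)
    (Γ : ℕ → ℝ) (Rη : ℕ → ℕ → ℝ) (Rd Rs Rdd : ℕ → ℝ)
    (heq : ∀ t : ℕ, ∀ᵐ ω ∂P,
      θ (t + 1) ω = θ t ω + γ * (-(lam * θ t ω) - δ * Γ t * θ t ω
        - (∑ s ∈ Finset.range t, Rη t s * θ s ω)
        - Rd t * θ 0 ω - (Rs t + Rdd t) * θstar ω + u t ω))
    (θinf : Ω → ℝ) (hθinf : MemLp θinf 2 P)
    (C c : ℝ) (hc : 0 < c)
    (hθconv : ∀ t : ℕ, eLpNorm (fun ω => θ t ω - θinf ω) 2 P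
      ≤ ENNReal.ofReal (C * Real.exp (-c * t)))
    (huconv : ∀ t : ℕ, eLpNorm (fun ω => u t ω - uinf ω) 2 P
      ≤ ENNReal.ofReal (C * Real.exp (-c * t)))
    (Γinf Rsinf : ℝ)
    (hΓ : Tendsto Γ atTop (nhds Γinf))
    (hRd : Tendsto Rd atTop (nhds 0))
    (hRdd : Tendsto Rdd atTop (nhds 0))
    (hRs : Tendsto Rs atTop (nhds Rsinf))
    (hRηbound : ∀ t s : ℕ, 1 ≤ s → |Rη (t + s) t| ≤ C * Real.exp (-c * s))
    (Rlim : ℕ → ℝ)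
    (hRηlim : ∀ s : ℕ, 1 ≤ s →
      Tendsto (fun t => Rη (t + s) t) atTop (nhds (Rlim s))) :
    Summable (fun s : ℕ => |Rlim (s + 1)|) ∧
      ∀ᵐ ω ∂P,
        0 = -(lam + δ * Γinf + ∑' s : ℕ, Rlim (s + 1)) * θinf ω
          - Rsinf * θstar ω + uinf ω := by
  refine ⟨summable_abs_of_tendsto_kernel hc hRηbound hRηlim, ?_⟩
  set Θ : ℕ → Lp ℝ 2 P := fun t => (hθl2 t).toLp (θ t)
  have hrec (t : ℕ) : Θ (t + 1) = Θ t + γ • (-(lam • Θ t) - (δ * Γ t) • Θ t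
      - ∑ s ∈ range t, Rη t s • Θ s - Rd t • Θ 0 - (Rs t + Rdd t) • hθstar.toLp θstar
      + (hul2 t).toLp (u t)) := by
    have hsum : (memLp_finsetSum' (range t) fun s _ => (hθl2 s).const_smul (Rη t s)).toLp
        (∑ s ∈ range t, Rη t s • θ s) = ∑ s ∈ range t, Rη t s • Θ s :=
      MemLp.toLp_finsetSum _ fun s => (hθl2 s).const_smul (Rη t s)
    have hae : θ (t + 1) =ᵐ[P] θ t + γ • (-(lam • θ t) - (δ * Γ t) • θ t
        - ∑ s ∈ range t, Rη t s • θ s - Rd t • θ 0 - (Rs t + Rdd t) • θstar + u t) := by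
      filter_upwards [heq t] with ω h
      simpa only [Pi.add_apply, Pi.sub_apply, Pi.neg_apply, Pi.smul_apply, Finset.sum_apply,
        smul_eq_mul] using h
    -- `MemLp.toLp` commutes definitionally with `+`, `-` and `•`; only the sum needs `hsum`
    rw [← hsum]
    exact MemLp.toLp_congr _ ((hθl2 (t + 1)).ae_eq hae) hae
  have hfix := zero_eq_of_tendsto_of_memory_recursion hγ.ne' hc hrec
    (MemLp.tendsto_toLp_of_eLpNorm_sub_le hθl2 hθinf (tendsto_mul_exp_neg_mul_natCast hc C) hθconv)
    (MemLp.tendsto_toLp_of_eLpNorm_sub_le hul2 huinf (tendsto_mul_exp_neg_mul_natCast hc C) huconv)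
    hΓ hRd hRdd hRs hRηbound hRηlim
  have hW := ((hθinf.const_smul (-(lam + δ * Γinf + ∑' s, Rlim (s + 1)))).sub
    (hθstar.const_smul Rsinf)).add huinf
  have h0 : (MemLp.zero : MemLp (0 : Ω → ℝ) 2 P).toLp 0 = hW.toLp _ := hfix
  filter_upwards [(MemLp.toLp_eq_toLp_iff _ _).1 h0] with ω h
  simpa only [Pi.zero_apply, Pi.add_apply, Pi.sub_apply, Pi.smul_apply, smul_eq_mul] using h

theorem stmt18 {Ω : Type*} [MeasurableSpace Ω] (P : Measure Ω) [IsProbabilityMeasure P]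
    (θstar uinf : Ω → ℝ) (θ u : ℕ → Ω → ℝ)
    (hθstar : MemLp θstar 2 P) (huinf : MemLp uinf 2 P)
    (hθl2 : ∀ t, MemLp (θ t) 2 P) (hul2 : ∀ t, MemLp (u t) 2 P)
    (γ lam δ : ℝ) (hγ : 0 < γ)
    (Γ : ℕ → ℝ) (Rη : ℕ → ℕ → ℝ) (Rd Rs Rdd : ℕ → ℝ)
    (heq : ∀ t : ℕ, ∀ᵐ ω ∂P,
      θ (t + 1) ω = θ t ω + γ * (-(lam * θ t ω) - δ * Γ t * θ t ω
        - (∑ s ∈ Finset.range t, Rη t s * θ s ω)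
        - Rd t * θ 0 ω - (Rs t + Rdd t) * θstar ω + u t ω))
    (θinf : Ω → ℝ) (hθinf : MemLp θinf 2 P)
    (C c : ℝ) (hC : 0 < C) (hc : 0 < c)
    (hθconv : ∀ t : ℕ, eLpNorm (fun ω => θ t ω - θinf ω) 2 P
      ≤ ENNReal.ofReal (C * Real.exp (-c * t)))
    (huconv : ∀ t : ℕ, eLpNorm (fun ω => u t ω - uinf ω) 2 P
      ≤ ENNReal.ofReal (C * Real.exp (-c * t)))
    (Γinf Rsinf : ℝ)
    (hΓ : Tendsto Γ atTop (nhds Γinf))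
    (hRd : Tendsto Rd atTop (nhds 0))
    (hRdd : Tendsto Rdd atTop (nhds 0))
    (hRs : Tendsto Rs atTop (nhds Rsinf))
    (hRηbound : ∀ t s : ℕ, 1 ≤ s → |Rη (t + s) t| ≤ C * Real.exp (-c * s))
    (Rlim : ℕ → ℝ)
    (hRηlim : ∀ s : ℕ, 1 ≤ s →
      Tendsto (fun t => Rη (t + s) t) atTop (nhds (Rlim s))) :
    Summable (fun s : ℕ => |Rlim (s + 1)|) ∧
      ∀ᵐ ω ∂P,
        0 = -(lam + δ * Γinf + ∑' s : ℕ, Rlim (s + 1)) * θinf ω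
          - Rsinf * θstar ω + uinf ω :=
  stmt18_general P θstar uinf θ u hθstar huinf hθl2 hul2 γ lam δ hγ Γ Rη Rd Rs Rdd heq θinf hθinf C
    c hc hθconv huconv Γinf Rsinf hΓ hRd hRdd hRs hRηbound Rlim hRηlim
end
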